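/- Reduction of partial correlation: let H be a real Hilbert space, Z a complete subspace, W a complete subspace with W + Z complete, and y, x ∈ H with y^{⊥Z} ≠ 0, x^{⊥Z} ≠ 0, and x^{⊥W+Z} ≠ 0. If y^{⊥Z} ⊥ W^{⊥Z} (i.e. ⟨y^{⊥Z}, w^{⊥Z}⟩ = 0 for all w ∈ W), then R_{y∼x|W+Z} = R_{y∼x|Z}/√(1 − R²_{x∼W|Z}), where R²_{x∼W|Z} is the partial R²-value of x on W given Z. -/

import Mathlib

/-!
Orthogonality of `y^{⊥Z}` to `W^{⊥Z}` means `y^{⊥Z} ⊥ W + Z`, so projecting further onto `W + Z`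
leaves the residual of `y` unchanged and both partial R-values share the numerator `⟪y^{⊥Z}, x⟫`.
They differ only in the factor `‖x^{⊥Z}‖` versus `‖x^{⊥W+Z}‖`, whose ratio is exactly
`√(1 − R²_{x∼W|Z})`.
-/

noncomputable section

open Submodule RealInnerProductSpace

variable {H : Type*} [NormedAddCommGroup H] [InnerProductSpace ℝ H]

/-- The residual `h^{⊥M} = h − P_M h` of `h` after projecting onto `M`. -/
def resid (M : Submodule ℝ H) [HasOrthogonalProjection M] (h : H) : H :=
  h - (orthogonalProjection M h : H)

/-- The marginal R²-value `R²_{y∼X} = 1 − ‖y^{⊥X}‖²/‖y‖²`. -/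
def R2 (y : H) (X : Submodule ℝ H) [HasOrthogonalProjection X] : ℝ :=
  1 - ‖resid X y‖ ^ 2 / ‖y‖ ^ 2

/-- The partial R²-value `R²_{y∼X|Z} = (R²_{y∼X+Z} − R²_{y∼Z})/(1 − R²_{y∼Z})`. -/
def R2p (y : H) (X Z : Submodule ℝ H) [HasOrthogonalProjection (X ⊔ Z)]
    [HasOrthogonalProjection Z] : ℝ :=
  (R2 y (X ⊔ Z) - R2 y Z) / (1 - R2 y Z)

/-- The partial R-value `R_{y∼x|Z} = ⟪y^{⊥Z}, x^{⊥Z}⟫/(‖y^{⊥Z}‖·‖x^{⊥Z}‖)`. -/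
def Rp (y x : H) (Z : Submodule ℝ H) [HasOrthogonalProjection Z] : ℝ :=
  ⟪resid Z y, resid Z x⟫ / (‖resid Z y‖ * ‖resid Z x‖)

/-- The partial f-value `f_{y∼x|Z} = R_{y∼x|Z}/√(1 − R²_{y∼x|Z})`. -/
def fp (y x : H) (Z : Submodule ℝ H) [HasOrthogonalProjection Z] : ℝ :=
  Rp y x Z / Real.sqrt (1 - Rp y x Z ^ 2)

/-- The regression estimand `β_{y∼d|M} = ⟪y^{⊥M}, d^{⊥M}⟫/‖d^{⊥M}‖²`. -/
def betaReg (y d : H) (M : Submodule ℝ H) [HasOrthogonalProjection M] : ℝ :=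
  ⟪resid M y, resid M d⟫ / ‖resid M d‖ ^ 2

/-- `σ_{y∼M} = ‖y^{⊥M}‖`. -/
def sigv (y : H) (M : Submodule ℝ H) [HasOrthogonalProjection M] : ℝ :=
  ‖resid M y‖

section Residuals

variable {M : Submodule ℝ H} [HasOrthogonalProjection M]

theorem resid_eq_sub_starProjection (h : H) : resid M h = h - M.starProjection h :=
  rfl

theorem resid_mem_orthogonal (h : H) : resid M h ∈ Mᗮ :=
  sub_starProjection_mem_orthogonal h

theorem inner_resid_eq_zero_of_mem (h : H) {v : H} (hv : v ∈ M) : ⟪resid M h, v⟫ = 0 := by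
  rw [real_inner_comm]
  exact resid_mem_orthogonal h v hv

theorem inner_resid_resid (y x : H) : ⟪resid M y, resid M x⟫ = ⟪resid M y, x⟫ := by
  rw [resid_eq_sub_starProjection x, inner_sub_right,
    inner_resid_eq_zero_of_mem y (M.starProjection_apply_mem x), sub_zero]

theorem ne_zero_of_resid_ne_zero {h : H} (hM : resid M h ≠ 0) : h ≠ 0 := by
  rintro rfl
  simp [resid] at hM

theorem resid_eq_of_le {Z : Submodule ℝ H} [HasOrthogonalProjection Z] (hZM : Z ≤ M) {y : H}
    (hy : resid Z y ∈ Mᗮ) : resid M y = resid Z y := by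
  rw [resid_eq_sub_starProjection, resid_eq_sub_starProjection,
    eq_starProjection_of_mem_orthogonal (hZM (Z.starProjection_apply_mem y)) hy]

end Residuals

theorem resid_mem_orthogonal_sup {Z W : Submodule ℝ H} [HasOrthogonalProjection Z] {y : H}
    (horth : ∀ w ∈ W, ⟪resid Z y, resid Z w⟫ = 0) : resid Z y ∈ (W ⊔ Z)ᗮ := by
  refine (mem_orthogonal' _ _).mpr fun v hv => ?_
  obtain ⟨w, hw, z, hz, rfl⟩ := mem_sup.mp hv
  rw [inner_add_right, ← inner_resid_resid, horth w hw, inner_resid_eq_zero_of_mem y hz,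
    add_zero]

theorem one_sub_R2 (y : H) (X : Submodule ℝ H) [HasOrthogonalProjection X] :
    1 - R2 y X = ‖resid X y‖ ^ 2 / ‖y‖ ^ 2 :=
  sub_sub_cancel _ _

theorem one_sub_R2p {y : H} {X Z : Submodule ℝ H} [HasOrthogonalProjection (X ⊔ Z)]
    [HasOrthogonalProjection Z] (hy : resid Z y ≠ 0) :
    1 - R2p y X Z = (‖resid (X ⊔ Z) y‖ / ‖resid Z y‖) ^ 2 := by
  have hZ : ‖resid Z y‖ ≠ 0 := norm_ne_zero_iff.mpr hy
  have hy0 : ‖y‖ ≠ 0 := norm_ne_zero_iff.mpr (ne_zero_of_resid_ne_zero hy)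
  have hden : 1 - R2 y Z ≠ 0 := by
    rw [one_sub_R2]
    positivity
  calc 1 - R2p y X Z = (1 - R2 y (X ⊔ Z)) / (1 - R2 y Z) := by
        rw [R2p]
        field_simp
        ring
    _ = _ := by
        rw [one_sub_R2, one_sub_R2]
        field_simp

theorem sqrt_one_sub_R2p {y : H} {X Z : Submodule ℝ H} [HasOrthogonalProjection (X ⊔ Z)]
    [HasOrthogonalProjection Z] (hy : resid Z y ≠ 0) :
    Real.sqrt (1 - R2p y X Z) = ‖resid (X ⊔ Z) y‖ / ‖resid Z y‖ := by
  rw [one_sub_R2p hy, Real.sqrt_sq (by positivity)]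

theorem partial_R_reduction_general
    (Z W : Submodule ℝ H) [CompleteSpace Z] [CompleteSpace ↥(W ⊔ Z)]
    (y x : H)
    (hx : resid Z x ≠ 0)
    (horth : ∀ w ∈ W, ⟪resid Z y, resid Z w⟫ = 0) :
    Rp y x (W ⊔ Z) = Rp y x Z / Real.sqrt (1 - R2p x W Z) := by
  have hres : resid (W ⊔ Z) y = resid Z y :=
    resid_eq_of_le le_sup_right (resid_mem_orthogonal_sup horth)
  have hxZ : ‖resid Z x‖ ≠ 0 := norm_ne_zero_iff.mpr hx
  rw [sqrt_one_sub_R2p hx, Rp, Rp, inner_resid_resid, inner_resid_resid, hres,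
    ← div_div _ ‖resid Z y‖ ‖resid Z x‖, div_div_div_cancel_right₀ hxZ, div_div]

/-- reduction of partial correlation. -/
theorem partial_R_reduction [CompleteSpace H]
    (Z W : Submodule ℝ H) [CompleteSpace Z] [CompleteSpace W] [CompleteSpace ↥(W ⊔ Z)]
    (y x : H)
    (hy : resid Z y ≠ 0) (hx : resid Z x ≠ 0) (hx2 : resid (W ⊔ Z) x ≠ 0)
    (horth : ∀ w ∈ W, ⟪resid Z y, resid Z w⟫ = 0) :
    Rp y x (W ⊔ Z) = Rp y x Z / Real.sqrt (1 - R2p x W Z) :=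
  partial_R_reduction_general Z W y x hx horth
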